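/- For all positive integers m and n, m divides gcd(n, F_n) if and only if ℓ(m) divides n, where ℓ(m) = lcm(m, z(m)). -/
import Mathlib


open scoped BigOperators

/-- `fibZ m` is the rank of appearance of `m`: the least positive `n` with `m ∣ F_n`. -/
noncomputable def fibZ (m : ℕ) : ℕ := sInf {n : ℕ | 0 < n ∧ m ∣ Nat.fib n}

/-- `fibL m = lcm(m, z(m))`. -/
noncomputable def fibL (m : ℕ) : ℕ := Nat.lcm m (fibZ m)

/-- `countIn S x` is the number of elements of `S` in `[1, x]`. -/
noncomputable def countIn (S : Set ℕ) (x : ℝ) : ℕ :=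
  (S ∩ {n : ℕ | 1 ≤ n ∧ (n : ℝ) ≤ x}).ncard

/-- `S` has asymptotic density `a`. -/
def HasDensity (S : Set ℕ) (a : ℝ) : Prop :=
  Filter.Tendsto (fun x : ℝ => (countIn S x : ℝ) / x) Filter.atTop (nhds a)

/-- `fibA k` is the set of positive integers `n` with `gcd(n, F_n) = k`. -/
def fibA (k : ℕ) : Set ℕ := {n : ℕ | 0 < n ∧ Nat.gcd n (Nat.fib n) = k}
/-- Descent: equality of consecutive Fibonacci pairs mod m propagates downward. -/
lemma fib_pair_descend (m : ℕ) (d : ℕ) : ∀ a b : ℕ,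
    ((Nat.fib (a + d) : ZMod m) = Nat.fib (b + d) ∧
     (Nat.fib (a + d + 1) : ZMod m) = Nat.fib (b + d + 1)) →
    ((Nat.fib a : ZMod m) = Nat.fib b ∧
     (Nat.fib (a + 1) : ZMod m) = Nat.fib (b + 1)) := by
  induction d with
  | zero => intro a b h; simpa using h
  | succ d ih =>
    intro a b h
    apply ih
    obtain ⟨h1, h2⟩ := h
    have e1 : (Nat.fib (a + d + 1) : ZMod m) = Nat.fib (b + d + 1) := by
      have := h1
      rw [Nat.add_succ a d, Nat.add_succ b d] at this
      exact this
    refine ⟨?_, e1⟩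
    have ha : (Nat.fib (a + d) : ZMod m) = Nat.fib (a + d + 2) - Nat.fib (a + d + 1) := by
      have : Nat.fib (a + d + 2) = Nat.fib (a + d) + Nat.fib (a + d + 1) := by
        rw [Nat.fib_add_two]
      rw [this]; push_cast; ring
    have hb : (Nat.fib (b + d) : ZMod m) = Nat.fib (b + d + 2) - Nat.fib (b + d + 1) := by
      have : Nat.fib (b + d + 2) = Nat.fib (b + d) + Nat.fib (b + d + 1) := by
        rw [Nat.fib_add_two]
      rw [this]; push_cast; ring
    rw [ha, hb, e1]
    have e2 : (Nat.fib (a + d + 2) : ZMod m) = Nat.fib (b + d + 2) := by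
      have := h2
      rw [Nat.add_succ a d, Nat.add_succ b d] at this
      exact this
    rw [e2]

/-- For every positive `m` there is a positive `n` with `m ∣ fib n`. -/
lemma exists_pos_fib_dvd (m : ℕ) (hm : 0 < m) : ∃ n, 0 < n ∧ m ∣ Nat.fib n := by
  haveI : NeZero m := ⟨hm.ne'⟩
  haveI : Finite (ZMod m × ZMod m) := inferInstance
  obtain ⟨i, j, hij, hfij⟩ := Finite.exists_ne_map_eq_of_infinite
    (fun n : ℕ => ((Nat.fib n : ZMod m), (Nat.fib (n + 1) : ZMod m)))
  wlog hlt : i < j generalizing i j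
  · exact this j i hij.symm hfij.symm (by omega)
  obtain ⟨h1, h2⟩ := Prod.mk.injEq .. ▸ hfij
  set d := j - i with hd
  have hji : j = d + i := by omega
  have := fib_pair_descend m i 0 d ⟨by simpa [hji, Nat.add_comm] using h1,
    by simpa [hji, Nat.add_comm] using h2⟩
  refine ⟨d, by omega, ?_⟩
  have h0 : (Nat.fib d : ZMod m) = 0 := by simpa using this.1.symm
  exact (ZMod.natCast_eq_zero_iff _ _).mp h0

lemma fibZ_spec (m : ℕ) (hm : 0 < m) : 0 < fibZ m ∧ m ∣ Nat.fib (fibZ m) := by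
  have hne : {n : ℕ | 0 < n ∧ m ∣ Nat.fib n}.Nonempty := by
    obtain ⟨n, hn⟩ := exists_pos_fib_dvd m hm
    exact ⟨n, hn⟩
  exact Nat.sInf_mem hne

/-- Divisibility of Fibonacci numbers is governed by the rank of appearance. -/
lemma dvd_fib_iff_fibZ_dvd (m n : ℕ) (hm : 0 < m) (hn : 0 < n) :
    m ∣ Nat.fib n ↔ fibZ m ∣ n := by
  obtain ⟨hz, hdvd⟩ := fibZ_spec m hm
  constructor
  · intro h
    have hg : m ∣ Nat.fib (Nat.gcd (fibZ m) n) := by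
      rw [Nat.fib_gcd]
      exact Nat.dvd_gcd hdvd h
    have hgpos : 0 < Nat.gcd (fibZ m) n := Nat.gcd_pos_of_pos_right _ hn
    have hle : fibZ m ≤ Nat.gcd (fibZ m) n := Nat.sInf_le ⟨hgpos, hg⟩
    have hge : Nat.gcd (fibZ m) n ≤ fibZ m := Nat.le_of_dvd hz (Nat.gcd_dvd_left _ _)
    have : Nat.gcd (fibZ m) n = fibZ m := le_antisymm hge hle
    rw [← this]; exact Nat.gcd_dvd_right _ _
  · intro h
    exact dvd_trans hdvd (Nat.fib_dvd _ _ h)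

theorem dvd_gcd_iff_fibL_dvd (m n : ℕ) (hm : 0 < m) (hn : 0 < n) :
    m ∣ Nat.gcd n (Nat.fib n) ↔ fibL m ∣ n := by
  rw [Nat.dvd_gcd_iff, fibL, Nat.lcm_dvd_iff, dvd_fib_iff_fibZ_dvd m n hm hn]
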